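/- Let R be an algebraic curvature tensor on an inner product space (with the symmetries R(X,Y)Z = -R(Y,X)Z, (R(X,Y)Z,W) = (R(Z,W)X,Y), and the first Bianchi identity). Suppose X, Y are vectors and W, U are vectors such that (R(W,Y)W, X) = 0 and (R(U,Y)U, X) = 0 and (R(W+U,Y)(W+U), X) = 0. Then (R(W,Y)U, X) = (1/2)(R(X,Y)U, W). -/

import Mathlib

/-!
Polarizing `Z ↦ (R(Z,Y)Z, X)` along `W` and `U` shows that `(R(W,Y)U, X)` is antisymmetric in
`W, U`, while the Bianchi identity and the curvature symmetries give
`(R(W,Y)U, X) - (R(U,Y)W, X) = (R(X,Y)U, W)`; adding the two gives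
`2 (R(W,Y)U, X) = (R(X,Y)U, W)`.
-/

open RealInnerProductSpace

section CurvatureTensor

variable {E : Type*} [NormedAddCommGroup E] [InnerProductSpace ℝ E]

theorem inner_apply_add_self_add_self (R : E → E → E → E)
    (hadd1 : ∀ a b c d, R (a + b) c d = R a c d + R b c d)
    (hadd3 : ∀ a b c d, R a b (c + d) = R a b c + R a b d) (X Y W U : E) :
    ⟪R (W + U) Y (W + U), X⟫ =
      ⟪R W Y W, X⟫ + ⟪R W Y U, X⟫ + ⟪R U Y W, X⟫ + ⟪R U Y U, X⟫ := by
  simp only [hadd1, hadd3, inner_add_left]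
  ring

theorem inner_apply_sub_inner_apply_swap (R : E → E → E → E)
    (hanti : ∀ a b c, R a b c = -R b a c)
    (hpair : ∀ a b c d, ⟪R a b c, d⟫ = ⟪R c d a, b⟫)
    (hbianchi : ∀ a b c, R a b c + R b c a + R c a b = 0) (X Y W U : E) :
    ⟪R W Y U, X⟫ - ⟪R U Y W, X⟫ = ⟪R X Y U, W⟫ := by
  have hcyclic : ⟪R W Y U, X⟫ + ⟪R Y U W, X⟫ + ⟪R U W Y, X⟫ = 0 := by
    rw [← inner_add_left, ← inner_add_left, hbianchi, inner_zero_left]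
  have hswap : ⟪R Y U W, X⟫ = -⟪R U Y W, X⟫ := by
    rw [hanti Y U W, inner_neg_left]
  have hlast : ⟪R U W Y, X⟫ = -⟪R X Y U, W⟫ := by
    rw [hpair U W Y X, hanti Y X U, inner_neg_left]
  linarith

end CurvatureTensor

/-- For an algebraic curvature tensor `R`, if
`(R(W,Y)W, X) = (R(U,Y)U, X) = (R(W+U,Y)(W+U), X) = 0`, then
`(R(W,Y)U, X) = (1/2)(R(X,Y)U, W)`. -/
theorem stmt_1 {E : Type*} [NormedAddCommGroup E] [InnerProductSpace ℝ E]
    (R : E → E → E → E)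
    (hadd1 : ∀ a b c d, R (a + b) c d = R a c d + R b c d)
    (hadd3 : ∀ a b c d, R a b (c + d) = R a b c + R a b d)
    (hanti : ∀ a b c, R a b c = -R b a c)
    (hpair : ∀ a b c d, ⟪R a b c, d⟫ = ⟪R c d a, b⟫)
    (hbianchi : ∀ a b c, R a b c + R b c a + R c a b = 0)
    (X Y W U : E)
    (hW : ⟪R W Y W, X⟫ = 0)
    (hU : ⟪R U Y U, X⟫ = 0)
    (hWU : ⟪R (W + U) Y (W + U), X⟫ = 0) :
    ⟪R W Y U, X⟫ = (1 / 2 : ℝ) * ⟪R X Y U, W⟫ := by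
  have hsymm := inner_apply_add_self_add_self R hadd1 hadd3 X Y W U
  have hdiff := inner_apply_sub_inner_apply_swap R hanti hpair hbianchi X Y W U
  linarith
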